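/- arXiv:2305.10465 — 6 statements merged into one kernel-verified Lean document; each statement's English description precedes it below -/
import Mathlib

section
/- Let A be a real 3×3 matrix with proper singular value decomposition A = U · diag(s₁, s₂, s₃) · Vᵀ, where U, V ∈ SO(3) and s₁ ≥ s₂ ≥ |s₃|. Then for every R ∈ SO(3), tr(Aᵀ R) ≤ s₁ + s₂ + s₃; equivalently, tr(S − Aᵀ R) ≥ 0 where S = diag(s₁, s₂, s₃). In particular the square root appearing in the rotation Laplace density exp(−√(tr(S − AᵀR)))/√(tr(S − AᵀR)) is well defined for all R ∈ SO(3). -/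
open Matrix

/-- `SO3 R` means `R` is a rotation matrix: `RᵀR = I` and `det R = 1`. -/
def SO3 (R : Matrix (Fin 3) (Fin 3) ℝ) : Prop :=
  Rᵀ * R = 1 ∧ R.det = 1

/-!
With `Q = UᵀRV ∈ SO(3)` one has `tr(AᵀR) = tr(SQ) = s₁Q₀₀ + s₂Q₁₁ + s₃Q₂₂`. The diagonal of a
rotation satisfies `Qᵢᵢ ≤ 1` and `Q₀₀ + Q₁₁ ≤ 1 + Q₂₂`; both come from the Gram matrix of `1 - Q`,
which for orthogonal `Q` equals `(1 - Q) + (1 - Q)ᵀ`. The ordering `s₁ ≥ s₂ ≥ |s₃|` then makes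
`s₁ + s₂ + s₃ - tr(SQ)` a nonnegative combination of these three inequalities.
-/

namespace Matrix

variable {m n R : Type*} [Fintype m]

lemma transpose_mul_self_apply_sq_le [CommRing R] [LinearOrder R] [IsStrictOrderedRing R]
    (M : Matrix m n R) (i j : n) :
    (Mᵀ * M) i j ^ 2 ≤ (Mᵀ * M) i i * (Mᵀ * M) j j := by
  simpa only [mul_apply, transpose_apply, sq] using
    Finset.sum_mul_sq_le_sq_mul_sq Finset.univ (fun k => M k i) (fun k => M k j)

lemma transpose_mul_self_apply_self_nonneg [CommRing R] [LinearOrder R] [IsStrictOrderedRing R]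
    (M : Matrix m n R) (i : n) : 0 ≤ (Mᵀ * M) i i := by
  simpa only [mul_apply, transpose_apply] using
    Finset.sum_nonneg fun k _ => mul_self_nonneg (M k i)

variable [Fintype n] [DecidableEq n]

lemma one_sub_transpose_mul_one_sub [CommRing R] {Q : Matrix n n R} (hQ : Qᵀ * Q = 1) :
    (1 - Q)ᵀ * (1 - Q) = (1 - Q) + (1 - Q)ᵀ := by
  rw [transpose_sub, transpose_one, sub_mul, one_mul, mul_sub, mul_one, hQ]
  abel

variable [CommRing R] [LinearOrder R] [IsStrictOrderedRing R] {Q : Matrix n n R}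

lemma apply_self_le_one_of_transpose_mul_self (hQ : Qᵀ * Q = 1) (i : n) : Q i i ≤ 1 := by
  have h := transpose_mul_self_apply_self_nonneg (1 - Q) i
  rw [one_sub_transpose_mul_one_sub hQ] at h
  simpa using h

lemma add_sq_le_of_transpose_mul_self (hQ : Qᵀ * Q = 1) {i j : n} (hij : i ≠ j) :
    (Q i j + Q j i) ^ 2 ≤ 4 * (1 - Q i i) * (1 - Q j j) := by
  have h := transpose_mul_self_apply_sq_le (1 - Q) i j
  rw [one_sub_transpose_mul_one_sub hQ] at h
  simp only [add_apply, sub_apply, transpose_apply, one_apply_eq, one_apply_ne hij,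
    one_apply_ne hij.symm] at h
  linarith

end Matrix

namespace SO3

variable {P Q : Matrix (Fin 3) (Fin 3) ℝ}

lemma transpose (hQ : SO3 Q) : SO3 Qᵀ :=
  ⟨by rw [transpose_transpose, mul_eq_one_comm, hQ.1], by rw [det_transpose, hQ.2]⟩

lemma mul (hP : SO3 P) (hQ : SO3 Q) : SO3 (P * Q) := by
  refine ⟨?_, by rw [det_mul, hP.2, hQ.2, one_mul]⟩
  rw [transpose_mul, Matrix.mul_assoc, ← Matrix.mul_assoc Pᵀ, hP.1, Matrix.one_mul, hQ.1]

lemma adjugate_eq_transpose (hQ : SO3 Q) : adjugate Q = Qᵀ := by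
  rw [← Matrix.one_mul (adjugate Q), ← hQ.1, Matrix.mul_assoc, mul_adjugate, hQ.2, one_smul,
    Matrix.mul_one]

lemma apply_two_two (hQ : SO3 Q) : Q 2 2 = Q 0 0 * Q 1 1 - Q 0 1 * Q 1 0 := by
  simpa [adjugate_fin_three, eq_comm] using congrFun (congrFun hQ.adjugate_eq_transpose 2) 2

/-- Since `Q₂₂ = Q₀₀Q₁₁ - Q₀₁Q₁₀`, this is `4Q₀₁Q₁₀ ≤ 4(1 - Q₀₀)(1 - Q₁₁)`, which follows from
`4xy ≤ (x + y)²` and Cauchy–Schwarz for the first two columns of `1 - Q`. -/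
lemma apply_zero_zero_add_apply_one_one_le (hQ : SO3 Q) : Q 0 0 + Q 1 1 ≤ 1 + Q 2 2 := by
  have h := add_sq_le_of_transpose_mul_self hQ.1 (show (0 : Fin 3) ≠ 1 by decide)
  rw [hQ.apply_two_two]
  nlinarith [sq_nonneg (Q 0 1 - Q 1 0)]

end SO3

/-- `s₁ + s₂ + s₃ - (s₁q₁ + s₂q₂ + s₃q₃)`
`= (s₁ - s₂)(1 - q₁) + s₂(1 + q₃ - q₁ - q₂) + (s₂ + s₃)(1 - q₃)`. -/
lemma mul_add_mul_add_mul_le_add_add {s₁ s₂ s₃ q₁ q₂ q₃ : ℝ} (h12 : s₂ ≤ s₁) (h23 : |s₃| ≤ s₂)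
    (hq₁ : q₁ ≤ 1) (hq₃ : q₃ ≤ 1) (hq : q₁ + q₂ ≤ 1 + q₃) :
    s₁ * q₁ + s₂ * q₂ + s₃ * q₃ ≤ s₁ + s₂ + s₃ := by
  have := mul_nonneg (sub_nonneg.2 h12) (sub_nonneg.2 hq₁)
  have := mul_nonneg ((abs_nonneg s₃).trans h23) (by linarith : 0 ≤ 1 + q₃ - q₁ - q₂)
  have := mul_nonneg (by linarith [neg_abs_le s₃] : 0 ≤ s₂ + s₃) (sub_nonneg.2 hq₃)
  linarith

/-- If `A = U · diag(s₁, s₂, s₃) · Vᵀ` is a proper SVD of `A`, then for every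
rotation `R`, `tr(AᵀR) ≤ s₁ + s₂ + s₃`; equivalently `tr(S − AᵀR) ≥ 0`
where `S = diag(s₁, s₂, s₃)`. -/
theorem trace_le_sum_singular_values
    (A U V : Matrix (Fin 3) (Fin 3) ℝ) (s₁ s₂ s₃ : ℝ)
    (hU : SO3 U) (hV : SO3 V) (h12 : s₁ ≥ s₂) (h23 : s₂ ≥ |s₃|)
    (hA : A = U * Matrix.diagonal ![s₁, s₂, s₃] * Vᵀ)
    (R : Matrix (Fin 3) (Fin 3) ℝ) (hR : SO3 R) :
    (Aᵀ * R).trace ≤ s₁ + s₂ + s₃ ∧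
    (Matrix.diagonal ![s₁, s₂, s₃] - Aᵀ * R).trace ≥ 0 := by
  set Q := Uᵀ * R * V
  have hQ : SO3 Q := (hU.transpose.mul hR).mul hV
  have htrace : (Aᵀ * R).trace = s₁ * Q 0 0 + s₂ * Q 1 1 + s₃ * Q 2 2 := by
    rw [hA, transpose_mul, transpose_mul, transpose_transpose, diagonal_transpose,
      Matrix.mul_assoc, trace_mul_cycle', ← Matrix.mul_assoc, trace_mul_comm]
    simp [Q, trace, Fin.sum_univ_three, Matrix.mul_assoc]
  have hle : (Aᵀ * R).trace ≤ s₁ + s₂ + s₃ := htrace ▸ mul_add_mul_add_mul_le_add_add h12 h23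
    (apply_self_le_one_of_transpose_mul_self hQ.1 0)
    (apply_self_le_one_of_transpose_mul_self hQ.1 2) hQ.apply_zero_zero_add_apply_one_one_le
  refine ⟨hle, ?_⟩
  rw [trace_sub, trace_diagonal, Fin.sum_univ_three]
  simpa using hle
end

section
/- Let S = diag(s₁, s₂, s₃) be a real 3×3 diagonal matrix. Then for every nonzero ψ = (ψ₁, ψ₂, ψ₃) ∈ ℝ³ with θ = ‖ψ‖, tr(S) − tr(S · exp(ψ̂)) = ((1 − cos θ)/θ²) · ((s₂ + s₃)ψ₁² + (s₁ + s₃)ψ₂² + (s₁ + s₂)ψ₃²). -/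
/-!
Since `ψ̂ v = ψ × v`, the matrix `ψ̂` satisfies `ψ̂³ = -θ² ψ̂`. Hence the odd and even parts of the
exponential series are multiples of `ψ̂` and `ψ̂²` with coefficients given by the sine and cosine
series, which is Rodrigues' formula `exp ψ̂ = 1 + (sin θ / θ) ψ̂ + ((1 - cos θ) / θ²) ψ̂²`.
Against a diagonal `S` only diagonal entries matter: those of `ψ̂` vanish and those of `ψ̂²` are
`ψᵢ² - θ²`.
-/

open Matrix

/-- The skew-symmetric "hat" matrix of a vector `ψ ∈ ℝ³`. -/
def hat (ψ : EuclideanSpace ℝ (Fin 3)) : Matrix (Fin 3) (Fin 3) ℝ :=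
  !![0, -ψ 2, ψ 1;
     ψ 2, 0, -ψ 0;
     -ψ 1, ψ 0, 0]

open scoped Nat

namespace Real

theorem hasSum_sin_div {t : ℝ} (ht : t ≠ 0) :
    HasSum (fun n : ℕ => (-t ^ 2) ^ n / (2 * n + 1)!) (sin t / t) :=
  ((hasSum_sin t).div_const t).congr_fun fun n => by
    rw [neg_pow, ← pow_mul, pow_succ]
    field_simp

theorem hasSum_one_sub_cos_div_sq {t : ℝ} (ht : t ≠ 0) :
    HasSum (fun n : ℕ => (-t ^ 2) ^ n / (2 * n + 2)!) ((1 - cos t) / t ^ 2) := by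
  have hcos := ((hasSum_nat_add_iff' 1).mpr (hasSum_cos t)).neg.div_const (t ^ 2)
  simp only [Finset.sum_range_one, neg_sub, mul_zero, pow_zero, Nat.factorial_zero, Nat.cast_one,
    div_one, one_mul] at hcos
  refine hcos.congr_fun fun n => ?_
  rw [neg_pow, ← pow_mul, mul_add, mul_one, pow_succ (-1 : ℝ), pow_add]
  field_simp

end Real

section PowThree

variable {R A : Type*} [CommSemiring R] [Semiring A] [Algebra R A] {a : A} {c : R}

theorem pow_two_mul_add_one_of_pow_three_eq_smul (ha : a ^ 3 = c • a) (n : ℕ) :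
    a ^ (2 * n + 1) = c ^ n • a := by
  induction n with
  | zero => simp
  | succ n ih =>
    rw [show 2 * (n + 1) + 1 = 2 * n + 1 + 2 by ring, pow_add, ih, smul_mul_assoc,
      ← pow_succ', ha, smul_smul, ← pow_succ]

theorem pow_two_mul_add_two_of_pow_three_eq_smul (ha : a ^ 3 = c • a) (n : ℕ) :
    a ^ (2 * n + 2) = c ^ n • a ^ 2 := by
  rw [pow_succ, pow_two_mul_add_one_of_pow_three_eq_smul ha, smul_mul_assoc, ← pow_two]

end PowThree

theorem NormedSpace.exp_eq_of_pow_three_eq_neg_sq_smul {A : Type*} [Ring A] [Algebra ℝ A]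
    [TopologicalSpace A] [IsTopologicalRing A] [ContinuousSMul ℝ A] [T2Space A]
    {a : A} {t : ℝ} (ht : t ≠ 0) (ha : a ^ 3 = (-t ^ 2) • a) :
    exp a = 1 + (Real.sin t / t) • a + ((1 - Real.cos t) / t ^ 2) • a ^ 2 := by
  have hodd : HasSum (fun n : ℕ => ((2 * n + 1)! : ℝ)⁻¹ • a ^ (2 * n + 1))
      ((Real.sin t / t) • a) := by
    refine ((Real.hasSum_sin_div ht).smul_const a).congr_fun fun n => ?_
    rw [pow_two_mul_add_one_of_pow_three_eq_smul ha, smul_smul, inv_mul_eq_div]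
  have heven_succ : HasSum (fun n : ℕ => ((2 * (n + 1))! : ℝ)⁻¹ • a ^ (2 * (n + 1)))
      (((1 - Real.cos t) / t ^ 2) • a ^ 2) := by
    refine ((Real.hasSum_one_sub_cos_div_sq ht).smul_const (a ^ 2)).congr_fun fun n => ?_
    rw [mul_add, mul_one, pow_two_mul_add_two_of_pow_three_eq_smul ha, smul_smul,
      inv_mul_eq_div]
  have heven : HasSum (fun n : ℕ => ((2 * n)! : ℝ)⁻¹ • a ^ (2 * n))
      (((1 - Real.cos t) / t ^ 2) • a ^ 2 + 1) := by
    have h := (hasSum_nat_add_iff (f := fun n : ℕ => ((2 * n)! : ℝ)⁻¹ • a ^ (2 * n)) 1).mp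
      heven_succ
    simpa only [Finset.sum_range_one, mul_zero, Nat.factorial_zero, Nat.cast_one, inv_one,
      pow_zero, one_smul] using h
  have hexp : HasSum (fun n : ℕ => (n ! : ℝ)⁻¹ • a ^ n)
      (((1 - Real.cos t) / t ^ 2) • a ^ 2 + 1 + (Real.sin t / t) • a) :=
    heven.even_add_odd hodd
  simp only [exp_eq_tsum ℝ, hexp.tsum_eq]
  abel

theorem hat_pow_three (ψ : EuclideanSpace ℝ (Fin 3)) : hat ψ ^ 3 = (-‖ψ‖ ^ 2) • hat ψ := by
  rw [EuclideanSpace.real_norm_sq_eq, Fin.sum_univ_three]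
  ext i j
  fin_cases i <;> fin_cases j <;>
    simp [hat, pow_succ, mul_apply, Fin.sum_univ_three] <;> ring

theorem trace_diagonal_mul_hat (s : Fin 3 → ℝ) (ψ : EuclideanSpace ℝ (Fin 3)) :
    (diagonal s * hat ψ).trace = 0 := by
  simp [trace_fin_three, hat]

theorem trace_diagonal_mul_hat_sq (s : Fin 3 → ℝ) (ψ : EuclideanSpace ℝ (Fin 3)) :
    (diagonal s * hat ψ ^ 2).trace
      = -((s 1 + s 2) * ψ 0 ^ 2 + (s 0 + s 2) * ψ 1 ^ 2 + (s 0 + s 1) * ψ 2 ^ 2) := by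
  simp [trace_fin_three, hat, sq, mul_apply, Fin.sum_univ_three]
  ring

/-- For a diagonal matrix `S = diag(s₁, s₂, s₃)` and nonzero `ψ ∈ ℝ³` with `θ = ‖ψ‖`,
`tr S − tr(S · exp(ψ̂)) = ((1 − cos θ)/θ²)((s₂+s₃)ψ₁² + (s₁+s₃)ψ₂² + (s₁+s₂)ψ₃²)`. -/
theorem trace_diagonal_sub_trace_mul_exp_hat
    (s₁ s₂ s₃ : ℝ) (ψ : EuclideanSpace ℝ (Fin 3)) (hψ : ψ ≠ 0) (θ : ℝ) (hθ : θ = ‖ψ‖) :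
    (Matrix.diagonal ![s₁, s₂, s₃]).trace
        - (Matrix.diagonal ![s₁, s₂, s₃] * NormedSpace.exp (hat ψ)).trace
      = ((1 - Real.cos θ) / θ ^ 2)
          * ((s₂ + s₃) * ψ 0 ^ 2 + (s₁ + s₃) * ψ 1 ^ 2 + (s₁ + s₂) * ψ 2 ^ 2) := by
  subst hθ
  rw [NormedSpace.exp_eq_of_pow_three_eq_neg_sq_smul (norm_ne_zero_iff.mpr hψ) (hat_pow_three ψ)]
  simp only [mul_add, mul_one, mul_smul_comm, trace_add, trace_smul, trace_diagonal_mul_hat,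
    trace_diagonal_mul_hat_sq, smul_eq_mul, cons_val_zero, cons_val_one, cons_val_two, head_cons,
    tail_cons]
  ring
end

section
/- (Local Gaussian/Laplace approximation near the mode) Let S = diag(s₁, s₂, s₃) be a real 3×3 diagonal matrix. Then the remainder ψ ↦ tr(S) − tr(S · exp(ψ̂)) − (1/2)·((s₂ + s₃)ψ₁² + (s₁ + s₃)ψ₂² + (s₁ + s₂)ψ₃²) is O(‖ψ‖⁴) as ψ → 0 in ℝ³; that is, there exist constants C > 0 and δ > 0 such that for all ψ with ‖ψ‖ < δ the absolute value of the remainder is at most C·‖ψ‖⁴. Hence near the mode, tr(S − Sᵀexp(ψ̂)) agrees with the quadratic form (1/2)ψᵀ diag(s₂+s₃, s₁+s₃, s₁+s₂) ψ to fourth order, so that the matrix Fisher density is approximated by a zero-mean multivariate Gaussian in ψ and the rotation Laplace density is approximated by a zero-mean multivariate Laplace in ψ. -/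
/-!
Expand `exp ψ̂` to third order. Since `ψ̂` and `ψ̂³` are skew-symmetric, their diagonals vanish
and they contribute nothing to `tr (S ·)` for diagonal `S`, while `ψ̂² = ψψᵀ - ‖ψ‖² I` produces
exactly the quadratic form. The fourth-order tail of the exponential series is at most
`‖ψ̂‖⁴ e^‖ψ̂‖` in any Banach-algebra norm; in the `ℓ∞` operator norm `‖ψ̂‖ ≤ 2 ‖ψ‖`.
-/

open Matrix

open Nat

theorem NormedSpace.norm_exp_sub_sum_range_le {𝔸 : Type*} [NormedRing 𝔸] [NormedAlgebra ℝ 𝔸]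
    [CompleteSpace 𝔸] (x : 𝔸) {n : ℕ} (hn : n ≠ 0) :
    ‖exp x - ∑ i ∈ Finset.range n, (i ! : ℝ)⁻¹ • x ^ i‖ ≤ ‖x‖ ^ n * Real.exp ‖x‖ := by
  have htail : exp x - ∑ i ∈ Finset.range n, (i ! : ℝ)⁻¹ • x ^ i
      = ∑' m, ((m + n)! : ℝ)⁻¹ • x ^ (m + n) := by
    rw [congrFun (exp_eq_tsum ℝ) x, ← (expSeries_summable' (𝕂 := ℝ) x).sum_add_tsum_nat_add n,
      add_sub_cancel_left]
  have hterm (m : ℕ) : ‖((m + n)! : ℝ)⁻¹ • x ^ (m + n)‖ ≤ ‖x‖ ^ n * (‖x‖ ^ m / m !) := by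
    rw [norm_smul, norm_inv, Real.norm_natCast]
    calc ((m + n)! : ℝ)⁻¹ * ‖x ^ (m + n)‖ ≤ (m ! : ℝ)⁻¹ * ‖x‖ ^ (m + n) := by
          gcongr
          · omega
          · exact norm_pow_le' x (by omega)
      _ = ‖x‖ ^ n * (‖x‖ ^ m / m !) := by ring
  rw [htail, Real.exp_eq_exp_ℝ, NormedSpace.exp_eq_tsum_div, ← tsum_mul_left]
  exact tsum_of_norm_bounded ((Real.summable_pow_div_factorial ‖x‖).mul_left _).hasSum hterm

namespace Matrix

attribute [local instance] Matrix.linftyOpSeminormedAddCommGroup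

variable {n α : Type*} [Fintype n] [SeminormedAddCommGroup α]

theorem norm_entry_le_linfty_opNorm (A : Matrix n n α) (i j : n) : ‖A i j‖ ≤ ‖A‖ :=
  (PiLp.norm_apply_le (WithLp.toLp 1 (A i)) j).trans
    (norm_le_pi_norm (fun i ↦ WithLp.toLp 1 (A i)) i)

theorem norm_trace_le_card_mul_linfty_opNorm (A : Matrix n n α) :
    ‖A.trace‖ ≤ Fintype.card n * ‖A‖ :=
  calc ‖A.trace‖ ≤ ∑ i, ‖A i i‖ := norm_sum_le _ _
    _ ≤ ∑ _i : n, ‖A‖ := Finset.sum_le_sum fun i _ ↦ A.norm_entry_le_linfty_opNorm i i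
    _ = Fintype.card n * ‖A‖ := by simp

theorem linfty_opNorm_le_of_forall_sum_le {A : Matrix n n α} {r : ℝ} (hr : 0 ≤ r)
    (h : ∀ i, ∑ j, ‖A i j‖ ≤ r) : ‖A‖ ≤ r :=
  (pi_norm_le_iff_of_nonneg hr).2 fun i ↦
    (PiLp.norm_eq_of_L1 (WithLp.toLp 1 (A i))).trans_le (h i)

end Matrix

theorem trace_diagonal_mul_expTaylor_hat (s₁ s₂ s₃ : ℝ) (ψ : EuclideanSpace ℝ (Fin 3)) :
    (diagonal ![s₁, s₂, s₃] * ∑ i ∈ Finset.range 4, (i ! : ℝ)⁻¹ • hat ψ ^ i).trace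
      = (diagonal ![s₁, s₂, s₃]).trace
        - (1 / 2) * ((s₂ + s₃) * ψ 0 ^ 2 + (s₁ + s₃) * ψ 1 ^ 2 + (s₁ + s₂) * ψ 2 ^ 2) := by
  simp only [succ_eq_add_one, reduceAdd, hat, Fin.isValue, Finset.sum_range_succ,
    Finset.range_one, Finset.sum_singleton, factorial, cast_one, inv_one, pow_zero, one_smul,
    zero_add, mul_one, pow_succ, one_mul, cast_ofNat, cons_mul, vecMul_cons, head_cons, zero_smul,
    tail_cons, neg_smul, smul_cons, smul_eq_mul, mul_zero, mul_neg, smul_empty, neg_cons,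
    neg_zero, neg_neg, neg_empty, empty_vecMul, add_zero, add_cons, empty_add_empty, empty_mul,
    Equiv.symm_apply_apply, smul_of, reduceMul, trace_fin_three, mul_apply, Matrix.add_apply,
    of_apply, cons_val', cons_val_zero, cons_val_fin_one, Fin.sum_univ_three, diagonal_apply_eq,
    one_apply_eq, ne_eq, zero_ne_one, not_false_eq_true, diagonal_apply_ne, one_ne_zero,
    one_apply_ne, cons_val_one, zero_mul, Fin.reduceEq, cons_val, trace_diagonal, one_div]
  ring

section

attribute [local instance] Matrix.linftyOpNormedRing Matrix.linftyOpNormedAlgebra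

theorem linfty_opNorm_hat_le (ψ : EuclideanSpace ℝ (Fin 3)) : ‖hat ψ‖ ≤ 2 * ‖ψ‖ := by
  have hψ (i : Fin 3) : |ψ i| ≤ ‖ψ‖ :=
    (Real.norm_eq_abs _).symm.trans_le (PiLp.norm_apply_le ψ i)
  refine Matrix.linfty_opNorm_le_of_forall_sum_le (by positivity) fun i ↦ ?_
  fin_cases i <;>
    simp only [hat, Fin.isValue, Fin.zero_eta, Fin.mk_one, Fin.reduceFinMk, of_apply, cons_val',
      cons_val_fin_one, cons_val_zero, cons_val_one, cons_val, Real.norm_eq_abs,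
      Fin.sum_univ_three, abs_zero, abs_neg, zero_add, add_zero] <;>
    linarith [hψ 0, hψ 1, hψ 2]

theorem abs_trace_diagonal_mul_exp_hat_sub_quadratic_le (s₁ s₂ s₃ : ℝ)
    (ψ : EuclideanSpace ℝ (Fin 3)) :
    |(diagonal ![s₁, s₂, s₃]).trace - (diagonal ![s₁, s₂, s₃] * NormedSpace.exp (hat ψ)).trace
        - (1 / 2) * ((s₂ + s₃) * ψ 0 ^ 2 + (s₁ + s₃) * ψ 1 ^ 2 + (s₁ + s₂) * ψ 2 ^ 2)|
      ≤ 48 * ‖![s₁, s₂, s₃]‖ * Real.exp (2 * ‖ψ‖) * ‖ψ‖ ^ 4 := by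
  set S := diagonal ![s₁, s₂, s₃]
  set E := NormedSpace.exp (hat ψ) - ∑ i ∈ Finset.range 4, (i ! : ℝ)⁻¹ • hat ψ ^ i
  have hremainder : S.trace - (S * NormedSpace.exp (hat ψ)).trace
      - (1 / 2) * ((s₂ + s₃) * ψ 0 ^ 2 + (s₁ + s₃) * ψ 1 ^ 2 + (s₁ + s₂) * ψ 2 ^ 2)
      = -(S * E).trace := by
    rw [Matrix.mul_sub, trace_sub, trace_diagonal_mul_expTaylor_hat]
    ring
  have hE : ‖E‖ ≤ (2 * ‖ψ‖) ^ 4 * Real.exp (2 * ‖ψ‖) :=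
    calc ‖E‖ ≤ ‖hat ψ‖ ^ 4 * Real.exp ‖hat ψ‖ :=
          NormedSpace.norm_exp_sub_sum_range_le _ four_ne_zero
      _ ≤ (2 * ‖ψ‖) ^ 4 * Real.exp (2 * ‖ψ‖) := by
          have := linfty_opNorm_hat_le ψ
          gcongr
  calc _ = ‖(S * E).trace‖ := by rw [hremainder, abs_neg, Real.norm_eq_abs]
    _ ≤ 3 * (‖S‖ * ‖E‖) := by
      refine (norm_trace_le_card_mul_linfty_opNorm (S * E)).trans ?_
      simpa using mul_le_mul_of_nonneg_left (norm_mul_le S E) zero_le_three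
    _ ≤ 3 * (‖![s₁, s₂, s₃]‖ * ((2 * ‖ψ‖) ^ 4 * Real.exp (2 * ‖ψ‖))) := by
      rw [linfty_opNorm_diagonal]
      gcongr
    _ = 48 * ‖![s₁, s₂, s₃]‖ * Real.exp (2 * ‖ψ‖) * ‖ψ‖ ^ 4 := by ring

end

/-- Local Gaussian/Laplace approximation near the mode: for `S = diag(s₁, s₂, s₃)`, the
remainder `tr S − tr(S exp(ψ̂)) − ½((s₂+s₃)ψ₁² + (s₁+s₃)ψ₂² + (s₁+s₂)ψ₃²)` is
`O(‖ψ‖⁴)` as `ψ → 0`. -/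
theorem trace_exp_hat_quadratic_approx (s₁ s₂ s₃ : ℝ) :
    ∃ C > (0 : ℝ), ∃ δ > (0 : ℝ), ∀ ψ : EuclideanSpace ℝ (Fin 3), ‖ψ‖ < δ →
      |(Matrix.diagonal ![s₁, s₂, s₃]).trace
          - (Matrix.diagonal ![s₁, s₂, s₃] * NormedSpace.exp (hat ψ)).trace
          - (1 / 2) * ((s₂ + s₃) * ψ 0 ^ 2 + (s₁ + s₃) * ψ 1 ^ 2 + (s₁ + s₂) * ψ 2 ^ 2)|
        ≤ C * ‖ψ‖ ^ 4 := by
  refine ⟨48 * ‖![s₁, s₂, s₃]‖ * Real.exp 2 + 1, by positivity, 1, one_pos, fun ψ hψ ↦ ?_⟩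
  calc _ ≤ 48 * ‖![s₁, s₂, s₃]‖ * Real.exp (2 * ‖ψ‖) * ‖ψ‖ ^ 4 :=
        abs_trace_diagonal_mul_exp_hat_sub_quadratic_le s₁ s₂ s₃ ψ
    _ ≤ 48 * ‖![s₁, s₂, s₃]‖ * Real.exp 2 * ‖ψ‖ ^ 4 := by gcongr; linarith
    _ ≤ (48 * ‖![s₁, s₂, s₃]‖ * Real.exp 2 + 1) * ‖ψ‖ ^ 4 := by gcongr; linarith
end

section
/- (Core identity for the equivalence of rotation Laplace and quaternion Laplace distributions) Let S = diag(s₁, s₂, s₃) be a real 3×3 diagonal matrix. Then for every unit quaternion q = w + xi + yj + zk, tr(S) − tr(S · γ(q)) = 2(s₂ + s₃)x² + 2(s₁ + s₃)y² + 2(s₁ + s₂)z². In particular, tr(S − Sᵀγ(q)) is a quadratic form in (w, x, y, z) with eigenvalues 0, 2(s₂+s₃), 2(s₁+s₃), 2(s₁+s₂), so that under the pullback along γ the rotation Laplace distribution with diagonal parameter S corresponds to a quaternion Laplace distribution, and the quadratic form is invariant under q ↦ −q. -/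
open Matrix Quaternion

/-- The standard transformation from quaternions to 3×3 matrices. -/
def gamma (q : Quaternion ℝ) : Matrix (Fin 3) (Fin 3) ℝ :=
  !![1 - 2*q.imJ^2 - 2*q.imK^2, 2*q.imI*q.imJ - 2*q.re*q.imK, 2*q.imI*q.imK + 2*q.re*q.imJ;
     2*q.imI*q.imJ + 2*q.re*q.imK, 1 - 2*q.imI^2 - 2*q.imK^2, 2*q.imJ*q.imK - 2*q.re*q.imI;
     2*q.imI*q.imK - 2*q.re*q.imJ, 2*q.imJ*q.imK + 2*q.re*q.imI, 1 - 2*q.imI^2 - 2*q.imJ^2]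

theorem gamma_neg (q : Quaternion ℝ) : gamma (-q) = gamma q := by
  simp only [gamma, re_neg, imI_neg, imJ_neg, imK_neg, neg_sq, mul_neg, neg_mul, neg_neg]

theorem Matrix.trace_diagonal_mul {n R : Type*} [Fintype n] [DecidableEq n]
    [NonUnitalNonAssocSemiring R] (d : n → R) (A : Matrix n n R) :
    (diagonal d * A).trace = ∑ i, d i * A i i := by
  simp only [trace, diag_apply, diagonal_mul]

theorem trace_diagonal_sub_trace_diagonal_mul_gamma (d : Fin 3 → ℝ) (q : Quaternion ℝ) :
    (diagonal d).trace - (diagonal d * gamma q).trace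
      = 2 * (d 1 + d 2) * q.imI ^ 2 + 2 * (d 0 + d 2) * q.imJ ^ 2
          + 2 * (d 0 + d 1) * q.imK ^ 2 := by
  simp only [trace_diagonal, trace_diagonal_mul, Fin.sum_univ_three, gamma, of_apply,
    cons_val', cons_val_zero, cons_val_one, cons_val_two, head_cons, tail_cons, empty_val',
    cons_val_fin_one, head_fin_const]
  ring

theorem trace_sub_trace_gamma_general (s₁ s₂ s₃ : ℝ) (q : Quaternion ℝ) :
    (Matrix.diagonal ![s₁, s₂, s₃]).trace
        - (Matrix.diagonal ![s₁, s₂, s₃] * gamma q).trace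
      = 2 * (s₂ + s₃) * q.imI ^ 2 + 2 * (s₁ + s₃) * q.imJ ^ 2
          + 2 * (s₁ + s₂) * q.imK ^ 2 ∧
    (Matrix.diagonal ![s₁, s₂, s₃]).trace
        - (Matrix.diagonal ![s₁, s₂, s₃] * gamma (-q)).trace
      = (Matrix.diagonal ![s₁, s₂, s₃]).trace
          - (Matrix.diagonal ![s₁, s₂, s₃] * gamma q).trace :=
  ⟨trace_diagonal_sub_trace_diagonal_mul_gamma ![s₁, s₂, s₃] q, by rw [gamma_neg]⟩

/-- Core identity for the equivalence of the rotation Laplace and quaternion Laplace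
distributions: for `S = diag(s₁, s₂, s₃)` and a unit quaternion `q = w + xi + yj + zk`,
`tr S − tr(S γ(q)) = 2(s₂+s₃)x² + 2(s₁+s₃)y² + 2(s₁+s₂)z²`; in particular this quadratic
form is invariant under `q ↦ −q`. -/
theorem trace_sub_trace_gamma (s₁ s₂ s₃ : ℝ) (q : Quaternion ℝ)
    (hq : q.re ^ 2 + q.imI ^ 2 + q.imJ ^ 2 + q.imK ^ 2 = 1) :
    (Matrix.diagonal ![s₁, s₂, s₃]).trace
        - (Matrix.diagonal ![s₁, s₂, s₃] * gamma q).trace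
      = 2 * (s₂ + s₃) * q.imI ^ 2 + 2 * (s₁ + s₃) * q.imJ ^ 2
          + 2 * (s₁ + s₂) * q.imK ^ 2 ∧
    (Matrix.diagonal ![s₁, s₂, s₃]).trace
        - (Matrix.diagonal ![s₁, s₂, s₃] * gamma (-q)).trace
      = (Matrix.diagonal ![s₁, s₂, s₃]).trace
          - (Matrix.diagonal ![s₁, s₂, s₃] * gamma q).trace :=
  trace_sub_trace_gamma_general s₁ s₂ s₃ q
end

section
/- (Mode of the quaternion Laplace distribution) Let M be a real 4×4 orthogonal matrix and Z = diag(0, z₁, z₂, z₃) with z₁, z₂, z₃ < 0. Then for every unit vector q ∈ ℝ⁴, qᵀ M Z Mᵀ q ≤ 0, with equality if and only if q equals the first column of M or its negative. Consequently the density of the quaternion Laplace distribution with parameters (M, Z), which is proportional to exp(−√(−qᵀMZMᵀq))/√(−qᵀMZMᵀq), attains its mode exactly at q₀ = ±(first column of M). -/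
/-! In the coordinates `y = Mᵀ q`, which preserve the Euclidean norm, the form becomes
`∑ i, zᵢ yᵢ²` with `z₀ = 0`: it is a sum of nonpositive terms, and it vanishes exactly when
`y` is supported on the first coordinate, i.e. when `y = ±e₀`, i.e. when `q = ±M e₀`. -/

open Matrix

section

variable {n : Type*} [Fintype n]

theorem Finset.sum_mul_sq_eq_zero_iff {d y : n → ℝ} (hd : ∀ i, d i ≤ 0) :
    ∑ i, d i * y i ^ 2 = 0 ↔ ∀ i, d i ≠ 0 → y i = 0 := by
  rw [Finset.sum_eq_zero_iff_of_nonpos fun i _ =>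
    mul_nonpos_of_nonpos_of_nonneg (hd i) (sq_nonneg _)]
  simp [or_iff_not_imp_left]

namespace Matrix

theorem dotProduct_mul_mul_transpose_mulVec {R : Type*} [CommSemiring R]
    (M A : Matrix n n R) (q : n → R) :
    q ⬝ᵥ (M * A * Mᵀ) *ᵥ q = (Mᵀ *ᵥ q) ⬝ᵥ A *ᵥ (Mᵀ *ᵥ q) := by
  rw [← mulVec_mulVec, ← mulVec_mulVec, dotProduct_mulVec, ← mulVec_transpose]

variable [DecidableEq n]

theorem dotProduct_diagonal_mulVec_self {R : Type*} [CommSemiring R] (d y : n → R) :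
    y ⬝ᵥ diagonal d *ᵥ y = ∑ i, d i * y i ^ 2 := by
  simp only [dotProduct, mulVec_diagonal]
  exact Finset.sum_congr rfl fun i _ => by ring

theorem eq_single_or_eq_neg_single_of_dotProduct_self_eq_one {y : n → ℝ}
    (hy : y ⬝ᵥ y = 1) {i₀ : n} (h : ∀ i ≠ i₀, y i = 0) :
    y = Pi.single i₀ 1 ∨ y = -Pi.single i₀ 1 := by
  have hy_single : y = Pi.single i₀ (y i₀) := by
    funext i
    by_cases hi : i = i₀
    · subst hi; simp
    · simp [h i hi, hi]
  have : y i₀ ^ 2 = 1 := by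
    rw [hy_single] at hy
    simpa [sq] using hy
  rcases sq_eq_one_iff.mp this with h1 | h1
  · exact .inl (by rw [hy_single, h1])
  · exact .inr (by rw [hy_single, h1, Pi.single_neg])

theorem transpose_mulVec_dotProduct_self {M : Matrix n n ℝ} (hM : Mᵀ * M = 1) (q : n → ℝ) :
    (Mᵀ *ᵥ q) ⬝ᵥ (Mᵀ *ᵥ q) = q ⬝ᵥ q := by
  rw [dotProduct_mulVec, ← mulVec_transpose, transpose_transpose, mulVec_mulVec,
    mul_eq_one_comm.mp hM, one_mulVec]

theorem transpose_mulVec_eq_iff {M : Matrix n n ℝ} (hM : Mᵀ * M = 1) {q y : n → ℝ} :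
    Mᵀ *ᵥ q = y ↔ q = M *ᵥ y := by
  constructor
  · rintro rfl
    rw [mulVec_mulVec, mul_eq_one_comm.mp hM, one_mulVec]
  · rintro rfl
    rw [mulVec_mulVec, hM, one_mulVec]

theorem dotProduct_mul_diagonal_mul_transpose_mulVec_nonpos (M : Matrix n n ℝ) {d : n → ℝ}
    (hd : ∀ i, d i ≤ 0) (q : n → ℝ) : q ⬝ᵥ (M * diagonal d * Mᵀ) *ᵥ q ≤ 0 := by
  rw [dotProduct_mul_mul_transpose_mulVec, dotProduct_diagonal_mulVec_self]
  exact Finset.sum_nonpos fun i _ => mul_nonpos_of_nonpos_of_nonneg (hd i) (sq_nonneg _)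

theorem dotProduct_mul_diagonal_mul_transpose_mulVec_eq_zero_iff {M : Matrix n n ℝ}
    (hM : Mᵀ * M = 1) {d : n → ℝ} {i₀ : n} (hd₀ : d i₀ = 0) (hd : ∀ i ≠ i₀, d i < 0)
    {q : n → ℝ} (hq : q ⬝ᵥ q = 1) :
    q ⬝ᵥ (M * diagonal d * Mᵀ) *ᵥ q = 0 ↔ q = M.col i₀ ∨ q = -M.col i₀ := by
  have hd_nonpos (i : n) : d i ≤ 0 := by
    rcases eq_or_ne i i₀ with rfl | hi
    exacts [hd₀.le, (hd i hi).le]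
  rw [dotProduct_mul_mul_transpose_mulVec, dotProduct_diagonal_mulVec_self,
    Finset.sum_mul_sq_eq_zero_iff hd_nonpos, ← mulVec_single_one, ← mulVec_neg,
    ← transpose_mulVec_eq_iff hM, ← transpose_mulVec_eq_iff hM]
  constructor
  · intro h
    exact eq_single_or_eq_neg_single_of_dotProduct_self_eq_one
      ((transpose_mulVec_dotProduct_self hM q).trans hq) fun i hi => h i (hd i hi).ne
  · rintro (h | h) i hi <;>
    · rw [h]
      have hi₀ : i ≠ i₀ := fun h => hi (h ▸ hd₀)
      simp [hi₀]

end Matrix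

end

/-- Mode of the quaternion Laplace distribution: for a real orthogonal 4×4 matrix `M`
and `Z = diag(0, z₁, z₂, z₃)` with `z₁, z₂, z₃ < 0`, every unit vector `q ∈ ℝ⁴` satisfies
`qᵀMZMᵀq ≤ 0`, with equality iff `q` is the first column of `M` or its negative. -/
theorem quaternion_laplace_mode
    (M : Matrix (Fin 4) (Fin 4) ℝ) (hM : Mᵀ * M = 1)
    (z₁ z₂ z₃ : ℝ) (h₁ : z₁ < 0) (h₂ : z₂ < 0) (h₃ : z₃ < 0)
    (q : Fin 4 → ℝ) (hq : ∑ i, q i ^ 2 = 1) :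
    q ⬝ᵥ (M * Matrix.diagonal ![0, z₁, z₂, z₃] * Mᵀ).mulVec q ≤ 0 ∧
    (q ⬝ᵥ (M * Matrix.diagonal ![0, z₁, z₂, z₃] * Mᵀ).mulVec q = 0 ↔
      q = (fun i => M i 0) ∨ q = -(fun i => M i 0)) := by
  have hd : ∀ i ≠ 0, ![0, z₁, z₂, z₃] i < 0 := by
    intro i hi
    fin_cases i
    exacts [absurd rfl hi, h₁, h₂, h₃]
  have hq' : q ⬝ᵥ q = 1 := by simpa only [dotProduct, sq] using hq
  refine ⟨dotProduct_mul_diagonal_mul_transpose_mulVec_nonpos M (fun i => ?_) q,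
    dotProduct_mul_diagonal_mul_transpose_mulVec_eq_zero_iff hM rfl hd hq'⟩
  rcases eq_or_ne i 0 with rfl | hi
  exacts [le_rfl, (hd i hi).le]
end

section
/- (Chordal mean) Let μ be a Borel probability measure on SO(3) and let M = ∫ R* dμ(R*) be its entrywise mean matrix. Suppose M has proper singular value decomposition M = U · diag(s₁, s₂, s₃) · Vᵀ with U, V ∈ SO(3), s₁ ≥ s₂ ≥ |s₃|, and s₂ + s₃ > 0. Then the function R ↦ ∫ ‖R − R*‖_F² dμ(R*) attains its minimum over SO(3) at the unique minimizer R̄ = U Vᵀ. -/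
open Matrix MeasureTheory

/-- The Borel (= product) measurable structure on the space of 3×3 real matrices. -/
instance : MeasurableSpace (Matrix (Fin 3) (Fin 3) ℝ) :=
  inferInstanceAs (MeasurableSpace ((Fin 3) → (Fin 3) → ℝ))

/-- The squared Frobenius norm of a 3×3 real matrix. -/
def frobSq (A : Matrix (Fin 3) (Fin 3) ℝ) : ℝ :=
  ∑ i, ∑ j, A i j ^ 2

/-!
For a rotation `R` the cost is `6 - 2 tr(Rᵀ M)`, and `tr(Rᵀ M) = Σ sᵢ Wᵢᵢ` for the rotation
`W = Uᵀ R V`. Twice the gap `s₁ + s₂ + s₃ - Σ sᵢ Wᵢᵢ` is `Σᵢ (sⱼ + sₖ)(1 + 2 Wᵢᵢ - tr W)` over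
`{i, j, k} = {1, 2, 3}`: the coefficients are positive by the hypotheses on the `sᵢ`, and the factors
are nonnegative for every rotation. Hence the gap vanishes only when `Wᵢᵢ = 1` for all `i`, that is
`W = 1`, i.e. `R = U Vᵀ`.
-/

local notation "Mat₃" => Matrix (Fin 3) (Fin 3) ℝ

theorem nonneg_of_forall_mul_nonneg_of_sum_pos {ι R : Type*} [Fintype ι] [Ring R] [LinearOrder R]
    [IsStrictOrderedRing R] {f : ι → R} (hmul : ∀ i j, 0 ≤ f i * f j) (hsum : 0 < ∑ i, f i)
    (i : ι) : 0 ≤ f i := by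
  by_contra! hi
  have hnonpos : ∀ j, f j ≤ 0 := fun j => nonpos_of_mul_nonneg_right (hmul i j) hi
  exact (Finset.sum_nonpos fun j _ => hnonpos j).not_gt hsum

lemma frobSq_eq_trace (A : Mat₃) : frobSq A = (Aᵀ * A).trace := by
  simp only [frobSq, trace, diag, mul_apply, transpose_apply, sq]
  exact Finset.sum_comm

lemma frobSq_sub (A B : Mat₃) : frobSq (A - B) = frobSq A - 2 * (Aᵀ * B).trace + frobSq B := by
  rw [frobSq_eq_trace, frobSq_eq_trace, frobSq_eq_trace, transpose_sub, sub_mul, mul_sub, mul_sub,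
    trace_sub, trace_sub, trace_sub, ← trace_transpose (Bᵀ * A), transpose_mul, transpose_transpose]
  ring

lemma frobSq_eq_zero_iff {A : Mat₃} : frobSq A = 0 ↔ A = 0 := by
  simp [frobSq, Finset.sum_eq_zero_iff_of_nonneg, Finset.sum_nonneg, sq_nonneg, ← Matrix.ext_iff]

lemma two_mul_sub_trace_diagonal_mul (W : Mat₃) (s₁ s₂ s₃ : ℝ) :
    2 * (s₁ + s₂ + s₃ - (diagonal ![s₁, s₂, s₃] * W).trace) =
      (s₂ + s₃) * (1 + 2 * W 0 0 - W.trace) + (s₁ + s₃) * (1 + 2 * W 1 1 - W.trace) +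
        (s₁ + s₂) * (1 + 2 * W 2 2 - W.trace) := by
  simp only [trace_fin_three, diagonal_mul, cons_val_zero, cons_val_one, cons_val_two, tail_cons,
    head_cons]
  ring

namespace SO3

variable {W : Mat₃} {s₁ s₂ s₃ : ℝ}

lemma mul_transpose (h : SO3 W) : W * Wᵀ = 1 :=
  mul_eq_one_comm.mp h.1

lemma transpose_s18 (h : SO3 W) : SO3 Wᵀ :=
  ⟨by rw [transpose_transpose, h.mul_transpose], by rw [det_transpose, h.2]⟩

lemma mul_s18 {W' : Mat₃} (h : SO3 W) (h' : SO3 W') : SO3 (W * W') := by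
  refine ⟨?_, by rw [det_mul, h.2, h'.2, one_mul]⟩
  rw [transpose_mul, Matrix.mul_assoc, ← Matrix.mul_assoc Wᵀ, h.1, Matrix.one_mul, h'.1]

lemma one : SO3 1 :=
  ⟨by simp, det_one⟩

lemma frobSq_eq (h : SO3 W) : frobSq W = 3 := by
  rw [frobSq_eq_trace, h.1, trace_one, Fintype.card_fin]
  norm_num

lemma abs_apply_le_one (h : SO3 W) (i j : Fin 3) : |W i j| ≤ 1 := by
  have hcol : ∑ k, W k j ^ 2 = 1 := by
    simpa [mul_apply, sq] using congrFun (congrFun h.1 j) j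
  rw [← sq_le_one_iff_abs_le_one, ← hcol]
  exact Finset.single_le_sum (f := fun k => W k j ^ 2) (fun k _ => sq_nonneg _) (Finset.mem_univ i)

lemma adjugate_eq (h : SO3 W) : W.adjugate = Wᵀ := by
  rw [← Matrix.one_mul W.adjugate, ← h.1, Matrix.mul_assoc, mul_adjugate, h.2, one_smul,
    Matrix.mul_one]

lemma eq_one_of_trace_eq_three (h : SO3 W) (htr : W.trace = 3) : W = 1 := by
  rw [← sub_eq_zero, ← frobSq_eq_zero_iff, frobSq_sub, h.frobSq_eq, one.frobSq_eq,
    Matrix.mul_one, trace_transpose, htr]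
  norm_num

/-- The four numbers `1 + tr W` and `1 + 2 Wᵢᵢ - tr W` are `4 q₀², …, 4 q₃²` for a unit quaternion
`q` representing `W`, so all their pairwise products are squares. -/
lemma trace_le_one_add_two_mul_diag (h : SO3 W) (i : Fin 3) : W.trace ≤ 1 + 2 * W i i := by
  have col : ∀ j, (Wᵀ * W) j j = 1 := fun j => by simp [h.1]
  have row : ∀ j, (W * Wᵀ) j j = 1 := fun j => by simp [h.mul_transpose]
  have cof : ∀ j, W.adjugate j j = W j j := fun j => by rw [h.adjugate_eq, transpose_apply]
  simp only [Fin.forall_fin_succ, Fin.succ_zero_eq_one, Fin.succ_one_eq_two, IsEmpty.forall_iff,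
    and_true, mul_apply, transpose_apply, Fin.sum_univ_three, adjugate_fin_three, of_apply, cons_val',
    cons_val_fin_one, cons_val_zero, cons_val_succ] at col row cof
  set g : Fin 4 → ℝ := ![1 + W.trace, 1 + 2 * W 0 0 - W.trace, 1 + 2 * W 1 1 - W.trace,
    1 + 2 * W 2 2 - W.trace]
  have hg : ∀ a b, 0 ≤ g a * g b := by
    intro a b
    fin_cases a <;> fin_cases b <;>
      simp only [g, trace_fin_three, Fin.isValue, Fin.reduceFinMk, Fin.zero_eta, Fin.mk_one,
        cons_val, cons_val_zero, cons_val_one] <;>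
      first
      | exact mul_self_nonneg _
      | linarith [sq_nonneg (W 2 1 - W 1 2), sq_nonneg (W 0 2 - W 2 0),
          sq_nonneg (W 1 0 - W 0 1), sq_nonneg (W 0 1 + W 1 0), sq_nonneg (W 0 2 + W 2 0),
          sq_nonneg (W 1 2 + W 2 1)]
  have hsum : ∑ a, g a = 4 := by
    simp only [g, Fin.sum_univ_four, Fin.isValue, cons_val, trace_fin_three]
    ring
  have hi := nonneg_of_forall_mul_nonneg_of_sum_pos hg (by rw [hsum]; norm_num) i.succ
  fin_cases i <;> simpa [g] using hi

lemma trace_diagonal_mul_le (h : SO3 W) (h₂₃ : 0 ≤ s₂ + s₃) (h₁₃ : 0 ≤ s₁ + s₃)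
    (h₁₂ : 0 ≤ s₁ + s₂) : (diagonal ![s₁, s₂, s₃] * W).trace ≤ s₁ + s₂ + s₃ := by
  have p₀ := mul_nonneg h₂₃ (sub_nonneg.2 (h.trace_le_one_add_two_mul_diag 0))
  have p₁ := mul_nonneg h₁₃ (sub_nonneg.2 (h.trace_le_one_add_two_mul_diag 1))
  have p₂ := mul_nonneg h₁₂ (sub_nonneg.2 (h.trace_le_one_add_two_mul_diag 2))
  linarith [two_mul_sub_trace_diagonal_mul W s₁ s₂ s₃]

lemma eq_one_of_trace_diagonal_mul_eq (h : SO3 W) (h₂₃ : 0 < s₂ + s₃) (h₁₃ : 0 < s₁ + s₃)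
    (h₁₂ : 0 < s₁ + s₂) (heq : (diagonal ![s₁, s₂, s₃] * W).trace = s₁ + s₂ + s₃) : W = 1 := by
  have hgap := two_mul_sub_trace_diagonal_mul W s₁ s₂ s₃
  rw [heq, sub_self, mul_zero] at hgap
  have p₀ := mul_nonneg h₂₃.le (sub_nonneg.2 (h.trace_le_one_add_two_mul_diag 0))
  have p₁ := mul_nonneg h₁₃.le (sub_nonneg.2 (h.trace_le_one_add_two_mul_diag 1))
  have p₂ := mul_nonneg h₁₂.le (sub_nonneg.2 (h.trace_le_one_add_two_mul_diag 2))
  have e₀ : 1 + 2 * W 0 0 - W.trace = 0 := (mul_eq_zero.1 (by linarith)).resolve_left h₂₃.ne'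
  have e₁ : 1 + 2 * W 1 1 - W.trace = 0 := (mul_eq_zero.1 (by linarith)).resolve_left h₁₃.ne'
  have e₂ : 1 + 2 * W 2 2 - W.trace = 0 := (mul_eq_zero.1 (by linarith)).resolve_left h₁₂.ne'
  exact h.eq_one_of_trace_eq_three (by linarith [trace_fin_three W])

end SO3

noncomputable def meanMatrix (μ : Measure Mat₃) : Mat₃ :=
  Matrix.of fun i j => ∫ R, R i j ∂μ

section Integral

variable {μ : Measure Mat₃}

lemma integrable_apply_of_ae_SO3 [IsFiniteMeasure μ] (hsupp : ∀ᵐ R ∂μ, SO3 R) (i j : Fin 3) :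
    Integrable (fun R : Mat₃ => R i j) μ := by
  refine Integrable.mono' (integrable_const 1) ?_ ?_
  · exact (by fun_prop : Measurable fun R : Mat₃ => R i j).aestronglyMeasurable
  · filter_upwards [hsupp] with R hR
    simpa using hR.abs_apply_le_one i j

lemma integrable_trace_transpose_mul (hint : ∀ i j, Integrable (fun R : Mat₃ => R i j) μ)
    (A : Mat₃) : Integrable (fun R => (Aᵀ * R).trace) μ := by
  simp only [trace, diag, mul_apply, transpose_apply]
  exact integrable_finsetSum _ fun j _ => integrable_finsetSum _ fun i _ =>
    (hint i j).const_mul _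

lemma integral_trace_transpose_mul (hint : ∀ i j, Integrable (fun R : Mat₃ => R i j) μ)
    (A : Mat₃) : ∫ R, (Aᵀ * R).trace ∂μ = (Aᵀ * meanMatrix μ).trace := by
  simp only [trace, diag, mul_apply, transpose_apply, meanMatrix, of_apply]
  rw [integral_finsetSum _ fun j _ => integrable_finsetSum _ fun i _ => (hint i j).const_mul _]
  refine Finset.sum_congr rfl fun j _ => ?_
  rw [integral_finsetSum _ fun i _ => (hint i j).const_mul _]
  simp_rw [integral_const_mul]

lemma integral_frobSq_sub [IsProbabilityMeasure μ] (hsupp : ∀ᵐ R ∂μ, SO3 R) (A : Mat₃) :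
    ∫ R, frobSq (A - R) ∂μ = frobSq A + 3 - 2 * (Aᵀ * meanMatrix μ).trace := by
  have hint := integrable_apply_of_ae_SO3 hsupp
  have hae : (fun R => frobSq (A - R)) =ᵐ[μ] fun R => frobSq A + 3 - 2 * (Aᵀ * R).trace := by
    filter_upwards [hsupp] with R hR
    rw [frobSq_sub, hR.frobSq_eq]
    ring
  rw [integral_congr_ae hae, integral_sub (integrable_const _)
    ((integrable_trace_transpose_mul hint A).const_mul 2), integral_const, integral_const_mul,
    integral_trace_transpose_mul hint]
  simp

end Integral

lemma trace_transpose_mul_svd (R U V D : Mat₃) (hD : Dᵀ = D) :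
    (Rᵀ * (U * D * Vᵀ)).trace = (D * (Uᵀ * R * V)).trace := by
  rw [← trace_transpose, transpose_mul, transpose_mul, transpose_mul, transpose_transpose,
    transpose_transpose, hD, Matrix.mul_assoc, trace_mul_comm V]
  simp only [Matrix.mul_assoc]

/-- The chordal mean: if `μ` is a Borel probability measure supported on `SO(3)` whose
entrywise mean matrix `M` has proper SVD `M = U · diag(s₁,s₂,s₃) · Vᵀ` with
`s₁ ≥ s₂ ≥ |s₃|` and `s₂ + s₃ > 0`, then `R ↦ ∫ ‖R − R*‖_F² dμ(R*)` attains its minimum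
over `SO(3)` at the unique minimizer `R̄ = UVᵀ`. -/
theorem chordal_mean_eq_UVT
    (μ : Measure (Matrix (Fin 3) (Fin 3) ℝ)) [IsProbabilityMeasure μ]
    (hsupp : ∀ᵐ R ∂μ, SO3 R)
    (M : Matrix (Fin 3) (Fin 3) ℝ) (hM : ∀ i j, M i j = ∫ R, R i j ∂μ)
    (U V : Matrix (Fin 3) (Fin 3) ℝ) (s₁ s₂ s₃ : ℝ)
    (hU : SO3 U) (hV : SO3 V) (h12 : s₁ ≥ s₂) (h23 : s₂ ≥ |s₃|) (hpos : s₂ + s₃ > 0)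
    (hsvd : M = U * Matrix.diagonal ![s₁, s₂, s₃] * Vᵀ) :
    ∀ R : Matrix (Fin 3) (Fin 3) ℝ, SO3 R →
      (∫ Rstar, frobSq (U * Vᵀ - Rstar) ∂μ) ≤ (∫ Rstar, frobSq (R - Rstar) ∂μ) ∧
      ((∫ Rstar, frobSq (R - Rstar) ∂μ) = (∫ Rstar, frobSq (U * Vᵀ - Rstar) ∂μ) →
        R = U * Vᵀ) := by
  set D := diagonal ![s₁, s₂, s₃]
  have hmean : meanMatrix μ = M := by ext i j; exact (hM i j).symm
  have cost : ∀ R, SO3 R → ∫ Rstar, frobSq (R - Rstar) ∂μ = 6 - 2 * (D * (Uᵀ * R * V)).trace := by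
    intro R hR
    rw [integral_frobSq_sub hsupp, hR.frobSq_eq, hmean, hsvd,
      trace_transpose_mul_svd _ _ _ _ (diagonal_transpose _)]
    ring
  intro R hR
  have hW₀ : Uᵀ * (U * Vᵀ) * V = 1 := by
    rw [← Matrix.mul_assoc, hU.1, Matrix.one_mul, hV.1]
  have hW : SO3 (Uᵀ * R * V) := (hU.transpose_s18.mul_s18 hR).mul_s18 hV
  have h₁₃ : 0 < s₁ + s₃ := by linarith
  have h₁₂ : 0 < s₁ + s₂ := by linarith [le_abs_self s₃]
  have htrD : D.trace = s₁ + s₂ + s₃ := by simp [D, Fin.sum_univ_three, add_assoc]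
  rw [cost R hR, cost _ (hU.mul_s18 hV.transpose_s18), hW₀, Matrix.mul_one, htrD]
  refine ⟨by linarith [hW.trace_diagonal_mul_le hpos.le h₁₃.le h₁₂.le], fun heq => ?_⟩
  have hW1 := hW.eq_one_of_trace_diagonal_mul_eq hpos h₁₃ h₁₂ (by linarith)
  calc R = U * (Uᵀ * R * V) * Vᵀ := by
        rw [← Matrix.mul_assoc, ← Matrix.mul_assoc, hU.mul_transpose, Matrix.one_mul,
          Matrix.mul_assoc, hV.mul_transpose, Matrix.mul_one]
    _ = U * Vᵀ := by rw [hW1, Matrix.mul_one]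
end
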